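/- arXiv:2103.14550 — 5 statements merged into one kernel-verified Lean document; each statement's English description precedes it below -/
import Mathlib

section
/- Let λ > 0, let σ ∈ ℝ^d be a unit vector, and let f : ℝ^d → ℝ be bounded and measurable. Then for all v, v⋆ ∈ ℝ^d, (g_λ⋆f)(v') + (g_λ⋆f)(v⋆') = ∫_{ℝ^d}∫_{ℝ^d} (f(u') + f(u⋆')) g_λ(u−v) g_λ(u⋆−v⋆) du du⋆, where (u', u⋆') denotes the post-collisional velocities of (u, u⋆) with the same σ. Consequently Δ(g_λ⋆f)(v, v⋆, σ) = ∫_{ℝ^d}∫_{ℝ^d} Δf(u, u⋆, σ) g_λ(u−v) g_λ(u⋆−v⋆) du du⋆. -/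
open scoped RealInnerProductSpace
open MeasureTheory

/-- The Gaussian density `g_λ(x) = (2πλ)^{−d/2} exp(−|x|²/(2λ))` on `ℝ^d`. -/
noncomputable def gaussDensity (d : ℕ) (lam : ℝ) (x : EuclideanSpace ℝ (Fin d)) : ℝ :=
  (2 * Real.pi * lam) ^ (-(d : ℝ) / 2) * Real.exp (-‖x‖ ^ 2 / (2 * lam))

/-- The convolution `(g_λ ⋆ f)(v) = ∫ g_λ(v − u) f(u) du`. -/
noncomputable def gaussConv (d : ℕ) (lam : ℝ) (f : EuclideanSpace ℝ (Fin d) → ℝ)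
    (v : EuclideanSpace ℝ (Fin d)) : ℝ :=
  ∫ u, gaussDensity d lam (v - u) * f u

/-!
For a unit vector `σ` the collision map `(u, u⋆) ↦ (u', u⋆')` is the reflection of `ℝ^d × ℝ^d`
in the hyperplane orthogonal to `(σ, -σ)`: a linear involution preserving `|u|² + |u⋆|²`.
Hence it preserves Lebesgue measure, and it carries the product Gaussian
`g_λ(u - v) g_λ(u⋆ - v⋆)` to `g_λ(u - v') g_λ(u⋆ - v⋆')`. Substituting `(u, u⋆) ↦ (u', u⋆')` turns
the double integral into `∫∫ (f(u) + f(u⋆)) g_λ(u - v') g_λ(u⋆ - v⋆')`, which is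
`(g_λ⋆f)(v') + (g_λ⋆f)(v⋆')` because `g_λ` has unit mass. Subtracting the same computation at
`(v, v⋆)` gives the identity for `Δ`.
-/

theorem LinearMap.measurePreserving_of_involutive {E : Type*} [NormedAddCommGroup E]
    [NormedSpace ℝ E] [MeasurableSpace E] [BorelSpace E] [FiniteDimensional ℝ E]
    (μ : Measure E) [μ.IsAddHaarMeasure] {T : E →ₗ[ℝ] E} (hT : Function.Involutive T) :
    MeasurePreserving T μ μ := by
  have hdet : LinearMap.det T * LinearMap.det T = 1 := by
    rw [← LinearMap.det_comp, show T ∘ₗ T = LinearMap.id from LinearMap.ext hT,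
      LinearMap.det_id]
  have habs : |LinearMap.det T| = 1 := by
    rcases mul_self_eq_one_iff.1 hdet with h | h <;> simp [h]
  refine ⟨T.continuous_of_finiteDimensional.measurable, ?_⟩
  rw [Measure.map_linearMap_addHaar_eq_smul_addHaar μ (left_ne_zero_of_mul_eq_one hdet),
    abs_inv, habs]
  simp

section Collision

variable {E : Type*} [NormedAddCommGroup E] [InnerProductSpace ℝ E] {σ : E}

noncomputable def collision (σ : E) : E × E →ₗ[ℝ] E × E :=
  LinearMap.id - ((innerₛₗ ℝ σ).comp (LinearMap.fst ℝ E E - LinearMap.snd ℝ E E)).smulRight (σ, -σ)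

@[simp]
theorem collision_apply (σ : E) (p : E × E) :
    collision σ p = (p.1 - ⟪p.1 - p.2, σ⟫ • σ, p.2 + ⟪p.1 - p.2, σ⟫ • σ) := by
  ext <;> simp [collision, real_inner_comm σ, sub_eq_add_neg]

theorem collision_involutive (hσ : ‖σ‖ = 1) : Function.Involutive (collision σ) := by
  rintro ⟨u, us⟩
  have hσσ : ⟪σ, σ⟫ = 1 := inner_self_eq_one_of_norm_eq_one hσ
  have hflip : ⟪u - ⟪u - us, σ⟫ • σ - (us + ⟪u - us, σ⟫ • σ), σ⟫ = -⟪u - us, σ⟫ := by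
    rw [show u - ⟪u - us, σ⟫ • σ - (us + ⟪u - us, σ⟫ • σ) = (u - us) - (2 * ⟪u - us, σ⟫) • σ by
      module, inner_sub_left, real_inner_smul_left, hσσ]
    ring
  simp only [collision_apply, hflip, neg_smul, sub_neg_eq_add, sub_add_cancel,
    add_neg_cancel_right]

theorem norm_sq_add_norm_sq_collision (hσ : ‖σ‖ = 1) (p : E × E) :
    ‖(collision σ p).1‖ ^ 2 + ‖(collision σ p).2‖ ^ 2 = ‖p.1‖ ^ 2 + ‖p.2‖ ^ 2 := by
  have hσσ : ⟪σ, σ⟫ = 1 := inner_self_eq_one_of_norm_eq_one hσ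
  simp only [collision_apply, ← real_inner_self_eq_norm_sq, inner_sub_left, inner_sub_right,
    inner_add_left, inner_add_right, real_inner_smul_left, real_inner_smul_right, hσσ,
    real_inner_comm p.1 σ, real_inner_comm p.2 σ]
  ring

theorem measurePreserving_collision [MeasurableSpace E] [BorelSpace E] [FiniteDimensional ℝ E]
    (μ : Measure E) [μ.IsAddHaarMeasure] (hσ : ‖σ‖ = 1) :
    MeasurePreserving (collision σ) (μ.prod μ) (μ.prod μ) :=
  LinearMap.measurePreserving_of_involutive _ (collision_involutive hσ)

end Collision

section Gaussian

variable {d : ℕ} {lam : ℝ}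

theorem integral_gaussDensity (hlam : 0 < lam) : ∫ x, gaussDensity d lam x = 1 := by
  have hb : 0 < (2 * lam)⁻¹ := by positivity
  simp_rw [gaussDensity, neg_div, ← inv_mul_eq_div, ← neg_mul]
  rw [integral_const_mul, GaussianFourier.integral_rexp_neg_mul_sq_norm hb,
    finrank_euclideanSpace_fin, show Real.pi / (2 * lam)⁻¹ = 2 * Real.pi * lam by field_simp,
    ← Real.rpow_add (by positivity)]
  ring_nf
  exact Real.rpow_zero _

theorem integrable_gaussDensity (hlam : 0 < lam) : Integrable (gaussDensity d lam) :=
  .of_integral_ne_zero (by rw [integral_gaussDensity hlam]; exact one_ne_zero)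

theorem gaussDensity_mul_gaussDensity_eq {x y x' y' : EuclideanSpace ℝ (Fin d)}
    (h : ‖x‖ ^ 2 + ‖y‖ ^ 2 = ‖x'‖ ^ 2 + ‖y'‖ ^ 2) :
    gaussDensity d lam x * gaussDensity d lam y = gaussDensity d lam x' * gaussDensity d lam y' := by
  simp only [gaussDensity, mul_mul_mul_comm _ (Real.exp _), ← Real.exp_add, ← add_div,
    ← neg_add, h]

theorem gaussConv_eq_integral_mul (f : EuclideanSpace ℝ (Fin d) → ℝ)
    (w : EuclideanSpace ℝ (Fin d)) :
    gaussConv d lam f w = ∫ u, f u * gaussDensity d lam (u - w) := by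
  refine integral_congr_ae (ae_of_all _ fun u => ?_)
  simp only [mul_comm (f u), gaussDensity, norm_sub_rev]

theorem integrable_prod_mul_gaussDensity (hlam : 0 < lam)
    {F : EuclideanSpace ℝ (Fin d) × EuclideanSpace ℝ (Fin d) → ℝ} (hF : Measurable F) {C : ℝ}
    (hC : ∀ p, |F p| ≤ C) (w : EuclideanSpace ℝ (Fin d) × EuclideanSpace ℝ (Fin d)) :
    Integrable (fun p => F p * (gaussDensity d lam (p.1 - w.1) * gaussDensity d lam (p.2 - w.2)))
      (volume.prod volume) :=
  ((integrable_gaussDensity hlam).comp_sub_right w.1).mul_prod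
    ((integrable_gaussDensity hlam).comp_sub_right w.2) |>.bdd_mul hF.aestronglyMeasurable
    (ae_of_all _ hC)

theorem integral_prod_add_mul_gaussDensity (hlam : 0 < lam)
    {f : EuclideanSpace ℝ (Fin d) → ℝ} (hf : Measurable f) {C : ℝ} (hC : ∀ x, |f x| ≤ C)
    (w : EuclideanSpace ℝ (Fin d) × EuclideanSpace ℝ (Fin d)) :
    ∫ p, (f p.1 + f p.2) * (gaussDensity d lam (p.1 - w.1) * gaussDensity d lam (p.2 - w.2))
        ∂(volume.prod volume) = gaussConv d lam f w.1 + gaussConv d lam f w.2 := by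
  have hg (c) : Integrable (fun u => gaussDensity d lam (u - c)) :=
    (integrable_gaussDensity hlam).comp_sub_right c
  have hfg (c) : Integrable (fun u => f u * gaussDensity d lam (u - c)) :=
    (hg c).bdd_mul hf.aestronglyMeasurable (ae_of_all _ hC)
  have hmass (c) : ∫ u, gaussDensity d lam (u - c) = 1 := by
    rw [integral_sub_right_eq_self, integral_gaussDensity hlam]
  have hsplit (p : EuclideanSpace ℝ (Fin d) × EuclideanSpace ℝ (Fin d)) :
      (f p.1 + f p.2) * (gaussDensity d lam (p.1 - w.1) * gaussDensity d lam (p.2 - w.2)) =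
        f p.1 * gaussDensity d lam (p.1 - w.1) * gaussDensity d lam (p.2 - w.2) +
          gaussDensity d lam (p.1 - w.1) * (f p.2 * gaussDensity d lam (p.2 - w.2)) := by
    ring
  simp_rw [hsplit]
  rw [integral_add ((hfg w.1).mul_prod (hg w.2)) ((hg w.1).mul_prod (hfg w.2)),
    integral_prod_mul (fun u => f u * gaussDensity d lam (u - w.1))
      (fun u => gaussDensity d lam (u - w.2)),
    integral_prod_mul (fun u => gaussDensity d lam (u - w.1))
      (fun u => f u * gaussDensity d lam (u - w.2)), hmass, hmass, mul_one, one_mul,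
    gaussConv_eq_integral_mul, gaussConv_eq_integral_mul]

theorem gaussDensity_mul_gaussDensity_collision_sub {σ : EuclideanSpace ℝ (Fin d)} (hσ : ‖σ‖ = 1)
    (p w : EuclideanSpace ℝ (Fin d) × EuclideanSpace ℝ (Fin d)) :
    gaussDensity d lam ((collision σ p).1 - (collision σ w).1) *
        gaussDensity d lam ((collision σ p).2 - (collision σ w).2) =
      gaussDensity d lam (p.1 - w.1) * gaussDensity d lam (p.2 - w.2) := by
  rw [← Prod.fst_sub, ← Prod.snd_sub, ← map_sub]
  exact gaussDensity_mul_gaussDensity_eq (norm_sq_add_norm_sq_collision hσ (p - w))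

theorem integral_prod_comp_collision_mul_gaussDensity {σ : EuclideanSpace ℝ (Fin d)}
    (hσ : ‖σ‖ = 1) (F : EuclideanSpace ℝ (Fin d) × EuclideanSpace ℝ (Fin d) → ℝ)
    (w : EuclideanSpace ℝ (Fin d) × EuclideanSpace ℝ (Fin d)) :
    ∫ p, F (collision σ p) * (gaussDensity d lam (p.1 - w.1) * gaussDensity d lam (p.2 - w.2))
        ∂(volume.prod volume) =
      ∫ p, F p * (gaussDensity d lam (p.1 - (collision σ w).1) *
        gaussDensity d lam (p.2 - (collision σ w).2)) ∂(volume.prod volume) := by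
  let T := LinearEquiv.ofInvolutive (collision σ) (collision_involutive hσ)
  conv_rhs => rw [← (measurePreserving_collision volume hσ).integral_comp
    T.toContinuousLinearEquiv.toHomeomorph.measurableEmbedding]
  simp_rw [gaussDensity_mul_gaussDensity_collision_sub hσ]

end Gaussian

/-- for bounded measurable `f`, the Gaussian mollification commutes with the
collision map: `(g_λ⋆f)(v') + (g_λ⋆f)(v⋆') = ∫∫ (f(u') + f(u⋆')) g_λ(u−v) g_λ(u⋆−v⋆) du du⋆`,
and consequently `Δ(g_λ⋆f)(v,v⋆,σ) = ∫∫ Δf(u,u⋆,σ) g_λ(u−v) g_λ(u⋆−v⋆) du du⋆`. -/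
theorem gaussConv_collision_invariance (d : ℕ) (lam : ℝ) (hlam : 0 < lam)
    (σ : EuclideanSpace ℝ (Fin d)) (hσ : ‖σ‖ = 1)
    (f : EuclideanSpace ℝ (Fin d) → ℝ) (hf_meas : Measurable f)
    (hf_bdd : ∃ C, ∀ x, |f x| ≤ C)
    (v vs : EuclideanSpace ℝ (Fin d)) :
    (gaussConv d lam f (v - ⟪v - vs, σ⟫ • σ) + gaussConv d lam f (vs + ⟪v - vs, σ⟫ • σ)
      = ∫ u, ∫ us, (f (u - ⟪u - us, σ⟫ • σ) + f (us + ⟪u - us, σ⟫ • σ)) *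
          (gaussDensity d lam (u - v) * gaussDensity d lam (us - vs))) ∧
    (gaussConv d lam f (v - ⟪v - vs, σ⟫ • σ) + gaussConv d lam f (vs + ⟪v - vs, σ⟫ • σ)
        - gaussConv d lam f v - gaussConv d lam f vs
      = ∫ u, ∫ us, (f (u - ⟪u - us, σ⟫ • σ) + f (us + ⟪u - us, σ⟫ • σ) - f u - f us) *
          (gaussDensity d lam (u - v) * gaussDensity d lam (us - vs))) := by
  obtain ⟨C, hC⟩ := hf_bdd
  have hmeas_post : Measurable fun p => f (collision σ p).1 + f (collision σ p).2 :=
    have hT := (collision σ).continuous_of_finiteDimensional.measurable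
    (hf_meas.comp (measurable_fst.comp hT)).add (hf_meas.comp (measurable_snd.comp hT))
  have hbound (x y) : |f x + f y| ≤ C + C := (abs_add_le _ _).trans (add_le_add (hC x) (hC y))
  have hI_post := integrable_prod_mul_gaussDensity hlam hmeas_post (fun _ => hbound _ _) (v, vs)
  have hI_pre := integrable_prod_mul_gaussDensity hlam (F := fun p => f p.1 + f p.2)
    (by fun_prop) (fun _ => hbound _ _) (v, vs)
  have hpost := integral_prod_comp_collision_mul_gaussDensity (lam := lam) hσ
    (fun q => f q.1 + f q.2) (v, vs)
  rw [integral_prod_add_mul_gaussDensity hlam hf_meas hC] at hpost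
  have hpre := integral_prod_add_mul_gaussDensity hlam hf_meas hC (v, vs)
  simp only [collision_apply] at hpost hI_post
  dsimp only at hpre hI_pre
  constructor
  · rw [← hpost, integral_prod _ hI_post]
  · rw [← hpost, sub_sub, ← hpre, ← integral_sub hI_post hI_pre]
    refine (integral_prod _ (hI_post.sub hI_pre)).trans
      (integral_congr_ae (ae_of_all _ fun u => integral_congr_ae (ae_of_all _ fun us => ?_)))
    simp only [Pi.sub_apply]
    ring
end

section
/- Let E be a locally compact, σ-compact metric space and let m and w be finite Borel measures on E. Then the supremum over all continuous compactly supported g : E → ℝ of ∫_E g dw − ∫_E (e^g − 1) dm equals ∫_E τ(dw/dm) dm (a value in [0,∞]) if w is absolutely continuous with respect to m, and equals +∞ otherwise. -/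
/-!
Since `τ` is the convex conjugate of `b ↦ e^b - 1`, the Fenchel–Young inequality
`k b - (e^b - 1) ≤ τ(k)` at `k = dw/dm` bounds every `∫ g dw - ∫ (e^g - 1) dm` by
`∫ τ(dw/dm) dm` when `w ≪ m`. Conversely, the functional is `L¹(m + w)`-continuous on uniformly
bounded functions, so by density of `C_c` in `L¹` the supremum may be taken over bounded measurable
`g`. The truncations of `log (dw/dm)` to `[-n, n]` (with `-n` where `dw/dm = 0`) maximise the
integrand pointwise over `[-n, n]`, so the integrands increase with `n` to `τ(dw/dm)`, and monotone
convergence gives the reverse inequality. If `w` is not `≪ m`, the function `c • 1_s` on an `m`-null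
set `s` with `w s > 0` has value `c * w s`, unbounded in `c`.
-/

open MeasureTheory
open scoped ENNReal

/-- The cost function `τ(k) = k log k − k + 1` (with `τ(0) = 1`, automatic since
`Real.log 0 = 0`). -/
noncomputable def tauCost (k : ℝ) : ℝ := k * Real.log k - k + 1

open Filter Topology

lemma exp_mul_sub_add_one_le_exp (a b : ℝ) : Real.exp b * (a - b + 1) ≤ Real.exp a :=
  calc Real.exp b * (a - b + 1) ≤ Real.exp b * Real.exp (a - b) := by
        gcongr; exact Real.add_one_le_exp _
    _ = Real.exp a := by rw [← Real.exp_add]; ring_nf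

lemma mul_sub_exp_le_of_nonneg_mul {a b b' : ℝ} (h : 0 ≤ (a - Real.exp b') * (b' - b)) :
    a * b - (Real.exp b - 1) ≤ a * b' - (Real.exp b' - 1) := by
  nlinarith [exp_mul_sub_add_one_le_exp b b']

lemma mul_sub_exp_le_tauCost {a : ℝ} (ha : 0 ≤ a) (b : ℝ) :
    a * b - (Real.exp b - 1) ≤ tauCost a := by
  rcases ha.eq_or_lt with rfl | ha
  · simp [tauCost, (Real.exp_pos b).le]
  · have h := mul_sub_exp_le_of_nonneg_mul (a := a) (b := b) (b' := Real.log a)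
      (by simp [Real.exp_log ha])
    rw [Real.exp_log ha] at h
    unfold tauCost
    linarith

lemma tauCost_nonneg {a : ℝ} (ha : 0 ≤ a) : 0 ≤ tauCost a := by
  simpa using mul_sub_exp_le_tauCost ha 0

lemma measurable_tauCost : Measurable tauCost := by
  unfold tauCost; fun_prop

/-- The maximiser of `b ↦ a * b - (exp b - 1)` over `[-n, n]` for `0 ≤ a`; the case `a = 0`,
where the maximiser is the endpoint `-n`, is separated because of the junk value `log 0 = 0`. -/
noncomputable def truncLog (n a : ℝ) : ℝ :=
  if a = 0 then -n else max (-n) (min n (Real.log a))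

lemma abs_truncLog_le {n : ℝ} (hn : 0 ≤ n) (a : ℝ) : |truncLog n a| ≤ n := by
  unfold truncLog
  split_ifs
  · simp [abs_of_nonneg hn]
  · exact abs_le.2 ⟨le_max_left _ _, max_le (by linarith) (min_le_left _ _)⟩

lemma measurable_truncLog (n : ℝ) : Measurable (truncLog n) := by
  unfold truncLog
  exact Measurable.ite (measurableSet_singleton 0) measurable_const (by fun_prop)

lemma mul_sub_exp_le_truncLog {n a b : ℝ} (ha : 0 ≤ a) (hb : |b| ≤ n) :
    a * b - (Real.exp b - 1) ≤ a * truncLog n a - (Real.exp (truncLog n a) - 1) := by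
  obtain ⟨hnb, hbn⟩ := abs_le.1 hb
  apply mul_sub_exp_le_of_nonneg_mul
  unfold truncLog
  split_ifs with h0
  · exact mul_nonneg_of_nonpos_of_nonpos (by simp [h0, (Real.exp_pos _).le]) (by linarith)
  · have ha : 0 < a := ha.lt_of_ne' h0
    rcases le_total (Real.log a) (-n) with hlo | hlo
    · rw [max_eq_left (min_le_of_right_le hlo)]
      refine mul_nonneg_of_nonpos_of_nonpos ?_ (by linarith)
      rw [sub_nonpos, ← Real.exp_log ha]
      exact Real.exp_le_exp.2 hlo
    rcases le_total n (Real.log a) with hhi | hhi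
    · rw [min_eq_left hhi, max_eq_right (by linarith)]
      refine mul_nonneg ?_ (by linarith)
      rw [sub_nonneg, ← Real.exp_log ha]
      exact Real.exp_le_exp.2 hhi
    · simp [min_eq_right hhi, max_eq_right hlo, Real.exp_log ha]

lemma tendsto_mul_sub_exp_truncLog {a : ℝ} (ha : 0 ≤ a) :
    Tendsto (fun n : ℕ => a * truncLog n a - (Real.exp (truncLog n a) - 1)) atTop
      (𝓝 (tauCost a)) := by
  rcases ha.eq_or_lt with rfl | ha
  · have h : Tendsto (fun n : ℕ => Real.exp (-n)) atTop (𝓝 0) :=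
      Real.tendsto_exp_atBot.comp (tendsto_neg_atTop_atBot.comp tendsto_natCast_atTop_atTop)
    simpa [truncLog, tauCost] using (tendsto_const_nhds (x := (1 : ℝ))).sub h
  · obtain ⟨N, hN⟩ := exists_nat_ge |Real.log a|
    refine tendsto_atTop_of_eventually_const (i₀ := N) fun n hn => ?_
    obtain ⟨hlo, hhi⟩ := abs_le.1 (hN.trans (Nat.cast_le.2 hn))
    simp [truncLog, ha.ne', min_eq_right hhi, max_eq_right hlo, Real.exp_log ha, tauCost]
    ring

lemma abs_exp_sub_exp_le {a b C : ℝ} (ha : a ≤ C) (hb : b ≤ C) :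
    |Real.exp a - Real.exp b| ≤ Real.exp C * |a - b| := by
  wlog hab : a ≤ b generalizing a b
  · rw [abs_sub_comm, abs_sub_comm a]
    exact this hb ha (le_of_not_ge hab)
  rw [abs_of_nonpos (by simpa using hab), abs_of_nonpos (by linarith)]
  nlinarith [exp_mul_sub_add_one_le_exp a b, Real.exp_le_exp.2 hb]

lemma abs_max_min_sub_le {C s : ℝ} (hs : |s| ≤ C) (t : ℝ) :
    |max (-C) (min C t) - s| ≤ |t - s| := by
  obtain ⟨h1, h2⟩ := abs_le.1 hs
  rw [abs_le]
  constructor <;> cases abs_cases (t - s) <;> cases max_cases (-C) (min C t) <;>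
    cases min_cases C t <;> linarith

lemma exists_continuous_hasCompactSupport_abs_le_integral_sub_le {X : Type*} [TopologicalSpace X]
    [NormalSpace X] [R1Space X] [WeaklyLocallyCompactSpace X] [MeasurableSpace X] [BorelSpace X]
    {μ : Measure X} [IsFiniteMeasure μ] [μ.Regular] {g : X → ℝ} (hg : Measurable g)
    {C : ℝ} (hC : 0 ≤ C) (hgC : ∀ x, |g x| ≤ C) {δ : ℝ} (hδ : 0 < δ) :
    ∃ φ : X → ℝ, Continuous φ ∧ HasCompactSupport φ ∧ (∀ x, |φ x| ≤ C) ∧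
      ∫ x, |φ x - g x| ∂μ ≤ δ := by
  have hgμ : Integrable g μ := .of_bound hg.aestronglyMeasurable C (.of_forall hgC)
  obtain ⟨φ, hφs, hφδ, hφc, hφμ⟩ := hgμ.exists_hasCompactSupport_integral_sub_le hδ
  let clamp : ℝ → ℝ := fun t => max (-C) (min C t)
  have hclamp : Continuous (clamp ∘ φ) := by fun_prop
  have hclamp_supp : HasCompactSupport (clamp ∘ φ) := hφs.comp_left (by simp [clamp, hC])
  refine ⟨clamp ∘ φ, hclamp, hclamp_supp,
    fun x => abs_le.2 ⟨le_max_left _ _, max_le (by linarith) (min_le_left _ _)⟩, ?_⟩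
  calc ∫ x, |clamp (φ x) - g x| ∂μ ≤ ∫ x, |φ x - g x| ∂μ :=
        integral_mono ((hclamp.integrable_of_hasCompactSupport hclamp_supp).sub hgμ).abs
          (hφμ.sub hgμ).abs fun x => abs_max_min_sub_le (hgC x) (φ x)
    _ = ∫ x, ‖g x - φ x‖ ∂μ := by simp_rw [Real.norm_eq_abs, abs_sub_comm]
    _ ≤ δ := hφδ

section DualFunctional

variable {E : Type*} [MeasurableSpace E]

noncomputable def dualFunctional (m w : Measure E) (g : E → ℝ) : ℝ :=
  ∫ x, g x ∂w - ∫ x, (Real.exp (g x) - 1) ∂m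

variable {m w : Measure E} [IsFiniteMeasure m] [IsFiniteMeasure w] {g : E → ℝ} {C : ℝ}

lemma integrable_exp_sub_one {μ : Measure E} [IsFiniteMeasure μ] (hg : Measurable g)
    (hgC : ∀ x, |g x| ≤ C) : Integrable (fun x => Real.exp (g x) - 1) μ := by
  refine (Integrable.of_bound (C := Real.exp C) (by fun_prop) (.of_forall fun x => ?_)).sub
    (integrable_const 1)
  rw [Real.norm_eq_abs, Real.abs_exp]
  exact Real.exp_le_exp.2 (abs_le.1 (hgC x)).2

lemma abs_dualFunctional_sub_le {φ : E → ℝ} (hg : Measurable g) (hφ : Measurable φ)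
    (hC : 0 ≤ C) (hgC : ∀ x, |g x| ≤ C) (hφC : ∀ x, |φ x| ≤ C) :
    |dualFunctional m w φ - dualFunctional m w g| ≤ Real.exp C * ∫ x, |φ x - g x| ∂(m + w) := by
  have hint : ∀ (μ : Measure E) [IsFiniteMeasure μ], Integrable (fun x => φ x - g x) μ :=
    fun μ _ => (Integrable.of_bound hφ.aestronglyMeasurable C (.of_forall hφC)).sub
      (.of_bound hg.aestronglyMeasurable C (.of_forall hgC))
  have hw : |∫ x, φ x ∂w - ∫ x, g x ∂w| ≤ ∫ x, |φ x - g x| ∂w := by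
    rw [← integral_sub (.of_bound hφ.aestronglyMeasurable C (.of_forall hφC))
      (.of_bound hg.aestronglyMeasurable C (.of_forall hgC))]
    exact abs_integral_le_integral_abs
  have hm : |∫ x, (Real.exp (φ x) - 1) ∂m - ∫ x, (Real.exp (g x) - 1) ∂m| ≤
      Real.exp C * ∫ x, |φ x - g x| ∂m := by
    rw [← integral_sub (integrable_exp_sub_one hφ hφC) (integrable_exp_sub_one hg hgC),
      ← integral_const_mul]
    refine abs_integral_le_integral_abs.trans
      (integral_mono_of_nonneg (.of_forall fun x => abs_nonneg _) ((hint m).abs.const_mul _)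
        (.of_forall fun x => ?_))
    simpa using abs_exp_sub_exp_le (abs_le.1 (hφC x)).2 (abs_le.1 (hgC x)).2
  have hw_nonneg : 0 ≤ ∫ x, |φ x - g x| ∂w := integral_nonneg fun x => abs_nonneg _
  calc |dualFunctional m w φ - dualFunctional m w g|
      = |(∫ x, φ x ∂w - ∫ x, g x ∂w) -
          (∫ x, (Real.exp (φ x) - 1) ∂m - ∫ x, (Real.exp (g x) - 1) ∂m)| := by
        unfold dualFunctional; ring_nf
    _ ≤ ∫ x, |φ x - g x| ∂w + Real.exp C * ∫ x, |φ x - g x| ∂m :=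
        (abs_sub _ _).trans (add_le_add hw hm)
    _ ≤ Real.exp C * (∫ x, |φ x - g x| ∂m + ∫ x, |φ x - g x| ∂w) := by
        nlinarith [Real.one_le_exp hC]
    _ = Real.exp C * ∫ x, |φ x - g x| ∂(m + w) := by
        rw [integral_add_measure (hint m).abs (hint w).abs]

lemma integrable_rnDeriv_mul_sub_exp (hac : w ≪ m) (hg : Measurable g)
    (hgC : ∀ x, |g x| ≤ C) :
    Integrable (fun x => (w.rnDeriv m x).toReal * g x - (Real.exp (g x) - 1)) m :=
  ((integrable_rnDeriv_smul_iff hac).2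
    (.of_bound hg.aestronglyMeasurable C (.of_forall hgC))).sub (integrable_exp_sub_one hg hgC)

lemma dualFunctional_eq_integral_rnDeriv (hac : w ≪ m) (hg : Measurable g)
    (hgC : ∀ x, |g x| ≤ C) :
    dualFunctional m w g = ∫ x, ((w.rnDeriv m x).toReal * g x - (Real.exp (g x) - 1)) ∂m := by
  rw [dualFunctional, integral_sub _ (integrable_exp_sub_one hg hgC), ← integral_rnDeriv_smul hac]
  · rfl
  · exact (integrable_rnDeriv_smul_iff hac).2
      (.of_bound hg.aestronglyMeasurable C (.of_forall hgC))

lemma dualFunctional_le_lintegral_tauCost (hac : w ≪ m) (hg : Measurable g)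
    (hgC : ∀ x, |g x| ≤ C) :
    (dualFunctional m w g : EReal) ≤
      ((∫⁻ x, ENNReal.ofReal (tauCost ((w.rnDeriv m x).toReal)) ∂m : ℝ≥0∞) : EReal) := by
  have hτ0 : ∀ x, 0 ≤ tauCost ((w.rnDeriv m x).toReal) := fun x =>
    tauCost_nonneg ENNReal.toReal_nonneg
  by_cases hτ : Integrable (fun x => tauCost ((w.rnDeriv m x).toReal)) m
  · rw [← ofReal_integral_eq_lintegral_ofReal hτ (.of_forall hτ0), EReal.coe_ennreal_ofReal,
      max_eq_left (integral_nonneg hτ0), dualFunctional_eq_integral_rnDeriv hac hg hgC,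
      EReal.coe_le_coe_iff]
    exact integral_mono (integrable_rnDeriv_mul_sub_exp hac hg hgC) hτ fun x =>
      mul_sub_exp_le_tauCost ENNReal.toReal_nonneg (g x)
  · have htop : ∫⁻ x, ENNReal.ofReal (tauCost ((w.rnDeriv m x).toReal)) ∂m = ⊤ := by
      by_contra hne
      exact hτ
        ⟨(measurable_tauCost.comp (w.measurable_rnDeriv m).ennreal_toReal).aestronglyMeasurable,
        (hasFiniteIntegral_iff_ofReal (.of_forall hτ0)).2 (lt_top_iff_ne_top.2 hne)⟩
    simp [htop]

section MetricSpace

variable [MetricSpace E] [LocallyCompactSpace E] [SigmaCompactSpace E] [BorelSpace E]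

lemma dualFunctional_le_iSup (hg : Measurable g) (hgC : ∀ x, |g x| ≤ C) :
    (dualFunctional m w g : EReal) ≤
      ⨆ φ : {φ : E → ℝ // Continuous φ ∧ HasCompactSupport φ}, (dualFunctional m w φ : EReal) := by
  refine EReal.le_of_forall_lt_iff_le.1 fun z hz => EReal.coe_le_coe_iff.2 ?_
  refine le_of_forall_pos_le_add fun ε hε => ?_
  obtain ⟨φ, hφ, hφs, hφC, hφg⟩ := exists_continuous_hasCompactSupport_abs_le_integral_sub_le
    (μ := m + w) hg (abs_nonneg C) (fun x => (hgC x).trans (le_abs_self C))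
    (div_pos hε (Real.exp_pos |C|))
  have hφz : dualFunctional m w φ < z :=
    EReal.coe_lt_coe_iff.1 ((le_iSup_of_le ⟨φ, hφ, hφs⟩ le_rfl).trans_lt hz)
  have hclose := abs_dualFunctional_sub_le (m := m) (w := w) hg hφ.measurable (abs_nonneg C)
    (fun x => (hgC x).trans (le_abs_self C)) hφC
  have hδ : Real.exp |C| * ∫ x, |φ x - g x| ∂(m + w) ≤ ε := by
    rw [← le_div_iff₀' (Real.exp_pos _)]
    exact hφg
  linarith [abs_le.1 hclose]

lemma iSup_dualFunctional_eq_top_of_not_absolutelyContinuous (hac : ¬ w ≪ m) :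
    ⨆ φ : {φ : E → ℝ // Continuous φ ∧ HasCompactSupport φ},
      (dualFunctional m w φ : EReal) = ⊤ := by
  obtain ⟨s, hs, hms, hws⟩ : ∃ s, MeasurableSet s ∧ m s = 0 ∧ w s ≠ 0 := by
    by_contra! h
    exact hac (Measure.AbsolutelyContinuous.mk fun s hs hms => h s hs hms)
  have hws : 0 < w.real s := ENNReal.toReal_pos hws (measure_ne_top w s)
  have hval : ∀ c : ℝ, dualFunctional m w (s.indicator fun _ => c) = c * w.real s := by
    intro c
    have hexp : (fun x => Real.exp (s.indicator (fun _ => c) x) - 1) =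
        s.indicator fun _ => Real.exp c - 1 := by
      ext x; by_cases hx : x ∈ s <;> simp [hx]
    simp [dualFunctional, hexp, integral_indicator_const _ hs, measureReal_def, hms, mul_comm]
  refine (EReal.eq_top_iff_forall_lt _).2 fun y => ?_
  calc (y : EReal) < ((|y| + 1) / w.real s * w.real s : ℝ) := by
        rw [div_mul_cancel₀ _ hws.ne', EReal.coe_lt_coe_iff]
        linarith [le_abs_self y]
    _ = dualFunctional m w (s.indicator fun _ => (|y| + 1) / w.real s) := by rw [hval]
    _ ≤ _ := dualFunctional_le_iSup (measurable_const.indicator hs)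
          (C := |(|y| + 1) / w.real s|) fun x => by
            by_cases hx : x ∈ s <;> simp [hx]

lemma lintegral_tauCost_le_iSup_dualFunctional (hac : w ≪ m) :
    ((∫⁻ x, ENNReal.ofReal (tauCost ((w.rnDeriv m x).toReal)) ∂m : ℝ≥0∞) : EReal) ≤
      ⨆ φ : {φ : E → ℝ // Continuous φ ∧ HasCompactSupport φ}, (dualFunctional m w φ : EReal) := by
  set f : E → ℝ := fun x => (w.rnDeriv m x).toReal
  have hf0 : ∀ x, 0 ≤ f x := fun x => ENNReal.toReal_nonneg
  set g : ℕ → E → ℝ := fun n x => truncLog n (f x)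
  have hg : ∀ n, Measurable (g n) := fun n =>
    (measurable_truncLog n).comp (w.measurable_rnDeriv m).ennreal_toReal
  have hgC : ∀ n x, |g n x| ≤ n := fun n x => abs_truncLog_le n.cast_nonneg _
  set h : ℕ → E → ℝ := fun n x => f x * g n x - (Real.exp (g n x) - 1)
  have h_nonneg : ∀ n x, 0 ≤ h n x := fun n x => by
    have := mul_sub_exp_le_truncLog (n := n) (hf0 x) (b := 0) (by simp)
    simpa only [mul_zero, Real.exp_zero, sub_self] using this
  have h_mono : ∀ x, Monotone fun n => h n x := fun x => monotone_nat_of_le_succ fun n =>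
    mul_sub_exp_le_truncLog (hf0 x) ((hgC n x).trans (by simp))
  have h_tendsto : Tendsto (fun n => ∫⁻ x, ENNReal.ofReal (h n x) ∂m) atTop
      (𝓝 (∫⁻ x, ENNReal.ofReal (tauCost (f x)) ∂m)) :=
    lintegral_tendsto_of_tendsto_of_monotone
      (fun n => (integrable_rnDeriv_mul_sub_exp hac (hg n) (hgC n)).aemeasurable.ennreal_ofReal)
      (.of_forall fun x i j hij => ENNReal.ofReal_le_ofReal (h_mono x hij))
      (.of_forall fun x => (ENNReal.continuous_ofReal.tendsto _).comp
        (tendsto_mul_sub_exp_truncLog (hf0 x)))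
  refine le_of_tendsto' (EReal.tendsto_coe_ennreal.2 h_tendsto) fun n => ?_
  rw [← ofReal_integral_eq_lintegral_ofReal (integrable_rnDeriv_mul_sub_exp hac (hg n) (hgC n))
    (.of_forall (h_nonneg n)), EReal.coe_ennreal_ofReal,
    max_eq_left (integral_nonneg (h_nonneg n)),
    ← dualFunctional_eq_integral_rnDeriv hac (hg n) (hgC n)]
  exact dualFunctional_le_iSup (hg n) (hgC n)

end MetricSpace
end DualFunctional

open Classical in
/-- variational formula. For finite Borel measures `m, w` on a locally
compact σ-compact metric space `E`, the supremum over continuous compactly supported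
`g` of `∫ g dw − ∫ (e^g − 1) dm` equals `∫ τ(dw/dm) dm ∈ [0,∞]` if `w ≪ m`, and `+∞`
otherwise. -/
theorem variational_formula_for_tau {E : Type*} [MetricSpace E]
    [LocallyCompactSpace E] [SigmaCompactSpace E]
    [MeasurableSpace E] [BorelSpace E]
    (m w : Measure E) [IsFiniteMeasure m] [IsFiniteMeasure w] :
    (⨆ g : {g : E → ℝ // Continuous g ∧ HasCompactSupport g},
        (((∫ x, g.1 x ∂w) - ∫ x, (Real.exp (g.1 x) - 1) ∂m : ℝ) : EReal)) =
      if w ≪ m then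
        ((∫⁻ x, ENNReal.ofReal (tauCost ((w.rnDeriv m x).toReal)) ∂m : ℝ≥0∞) : EReal)
      else (⊤ : EReal) := by
  change ⨆ g : {g : E → ℝ // Continuous g ∧ HasCompactSupport g},
    (dualFunctional m w g.1 : EReal) = _
  split_ifs with hac
  · refine le_antisymm (iSup_le fun ⟨g, hg, hgs⟩ => ?_)
      (lintegral_tauCost_le_iSup_dualFunctional hac)
    obtain ⟨C, hC⟩ := hg.bounded_above_of_compact_support hgs
    exact dualFunctional_le_lintegral_tauCost hac hg.measurable hC
  · exact iSup_dualFunctional_eq_top_of_not_absolutelyContinuous hac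
end

section
/- Let (X,d) be a metric space, T > 0, x : [0,T] → X càdlàg, and ε > 0. Then there exists δ > 0 such that for every t ∈ [0,T], either there exists s ∈ [t, t+δ) ∩ [0,T] with d(x(s−), x(s)) ≥ ε, or for all s ∈ [t, t+δ) ∩ [0,T] one has d(x(t), x(s)) < ε. -/
open Filter Set

/-- for a càdlàg path `x : [0,T] → X` (with left-limit function `xm`,
where we set `xm 0 = x 0`) and `ε > 0`, there is `δ > 0` such that for every
`t ∈ [0,T]`, either some `s ∈ [t, t+δ) ∩ [0,T]` has a jump `d(x(s−), x(s)) ≥ ε`,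
or `d(x(t), x(s)) < ε` for all `s ∈ [t, t+δ) ∩ [0,T]`. -/
theorem cadlag_uniform_oscillation_control {X : Type*} [MetricSpace X]
    (T : ℝ) (hT : 0 < T) (x xm : ℝ → X)
    (hright : ∀ t ∈ Set.Ico (0 : ℝ) T,
      Tendsto x (nhdsWithin t (Set.Ioc t T)) (nhds (x t)))
    (hleft : ∀ t ∈ Set.Ioc (0 : ℝ) T,
      Tendsto x (nhdsWithin t (Set.Ico 0 t)) (nhds (xm t)))
    (h0 : xm 0 = x 0)
    (ε : ℝ) (hε : 0 < ε) :
    ∃ δ > (0 : ℝ), ∀ t ∈ Set.Icc (0 : ℝ) T,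
      (∃ s ∈ Set.Ico t (t + δ) ∩ Set.Icc (0 : ℝ) T, ε ≤ dist (xm s) (x s)) ∨
      (∀ s ∈ Set.Ico t (t + δ) ∩ Set.Icc (0 : ℝ) T, dist (x t) (x s) < ε) := by
  -- Right continuity including the point itself.
  have hright' : ∀ a ∈ Set.Icc (0 : ℝ) T,
      Tendsto x (nhdsWithin a (Set.Icc a T)) (nhds (x a)) := by
    intro a ha
    have h1 : Tendsto x (nhdsWithin a (Set.Ioc a T)) (nhds (x a)) := by
      rcases eq_or_lt_of_le ha.2 with h | h
      · simp [h, Set.Ioc_self, nhdsWithin_empty]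
      · exact hright a ⟨ha.1, h⟩
    rw [← Set.Ioc_insert_left ha.2, nhdsWithin_insert]
    exact Filter.tendsto_sup.2 ⟨tendsto_pure_nhds x a, h1⟩
  by_contra hcon
  push_neg at hcon
  have hδ : ∀ n : ℕ, (0 : ℝ) < 1 / (n + 1) := by
    intro n; positivity
  choose t ht hnj s hs hbad using fun n : ℕ => hcon (1 / (n + 1)) (hδ n)
  -- Extract a convergent subsequence of `t`.
  obtain ⟨a, haT, φ, hφ, hta⟩ := isCompact_Icc.tendsto_subseq ht
  have hφtop : Tendsto φ atTop atTop := hφ.tendsto_atTop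
  -- `s ∘ φ` converges to `a` as well.
  have hδ0 : Tendsto (fun n : ℕ => 1 / ((φ n : ℝ) + 1)) atTop (nhds 0) :=
    tendsto_one_div_add_atTop_nhds_zero_nat.comp hφtop
  have hts : ∀ n, t n ≤ s n := fun n => (hs n).1.1
  have hst : ∀ n, s n < t n + 1 / (n + 1) := fun n => (hs n).1.2
  have hsa : Tendsto (fun n => s (φ n)) atTop (nhds a) := by
    have hup : Tendsto (fun n => t (φ n) + 1 / ((φ n : ℝ) + 1)) atTop (nhds (a + 0)) :=
      hta.add hδ0
    rw [add_zero] at hup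
    exact tendsto_of_tendsto_of_tendsto_of_le_of_le hta hup
      (fun n => hts (φ n)) (fun n => (hst (φ n)).le)
  -- Generic contradiction step.
  have key : ∀ (u v : ℕ → ℝ) (p q : X), Tendsto (fun n => x (u n)) atTop (nhds p) →
      Tendsto (fun n => x (v n)) atTop (nhds q) → dist p q < ε →
      (∀ n, ε ≤ dist (x (u n)) (x (v n))) → False := by
    intro u v p q hu hv hlt hge
    have hd : Tendsto (fun n => dist (x (u n)) (x (v n))) atTop (nhds (dist p q)) :=
      hu.dist hv
    obtain ⟨n, hn⟩ := (hd.eventually_lt_const hlt).exists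
    exact absurd (hge n) (not_le.2 hn)
  by_cases hA : ∃ᶠ n in atTop, t (φ n) < a
  · -- points approaching `a` strictly from the left exist
    obtain ⟨ψ, hψ, hψlt⟩ := Filter.extraction_of_frequently_atTop hA
    have hψtop : Tendsto ψ atTop atTop := hψ.tendsto_atTop
    have hta' : Tendsto (fun n => t (φ (ψ n))) atTop (nhds a) := hta.comp hψtop
    have hsa' : Tendsto (fun n => s (φ (ψ n))) atTop (nhds a) := hsa.comp hψtop
    have ha0 : 0 < a := lt_of_le_of_lt (ht (φ (ψ 0))).1 (hψlt 0)
    have hleft' : Tendsto x (nhdsWithin a (Set.Ico 0 a)) (nhds (xm a)) :=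
      hleft a ⟨ha0, haT.2⟩
    have hxu : Tendsto (fun n => x (t (φ (ψ n)))) atTop (nhds (xm a)) :=
      hleft'.comp (tendsto_nhdsWithin_of_tendsto_nhds_of_eventually_within _ hta'
        (Eventually.of_forall fun n => ⟨(ht (φ (ψ n))).1, hψlt n⟩))
    by_cases hB : ∃ᶠ n in atTop, a ≤ s (φ (ψ n))
    · -- case C3: `a` lies in the interval `[t_k, t_k + δ_k)`
      obtain ⟨θ, hθ, hθle⟩ := Filter.extraction_of_frequently_atTop hB
      have hθtop : Tendsto θ atTop atTop := hθ.tendsto_atTop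
      have hsa'' : Tendsto (fun n => s (φ (ψ (θ n)))) atTop (nhds a) := hsa'.comp hθtop
      have hxv : Tendsto (fun n => x (s (φ (ψ (θ n))))) atTop (nhds (x a)) :=
        (hright' a haT).comp (tendsto_nhdsWithin_of_tendsto_nhds_of_eventually_within _ hsa''
          (Eventually.of_forall fun n => ⟨hθle n, (hs (φ (ψ (θ n)))).2.2⟩))
      have hxu' : Tendsto (fun n => x (t (φ (ψ (θ n))))) atTop (nhds (xm a)) :=
        hxu.comp hθtop
      have hjump : dist (xm a) (x a) < ε := by
        refine hnj (φ (ψ (θ 0))) a ⟨⟨(hψlt (θ 0)).le, ?_⟩, haT⟩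
        exact lt_of_le_of_lt (hθle 0) (hst (φ (ψ (θ 0))))
      exact key _ _ _ _ hxu' hxv hjump (fun n => hbad (φ (ψ (θ n))))
    · -- both sequences approach from the left
      have hB' : ∀ᶠ n in atTop, s (φ (ψ n)) < a := by
        simpa [Filter.not_frequently, not_le] using hB
      obtain ⟨θ, hθ, hθlt⟩ := Filter.extraction_of_frequently_atTop hB'.frequently
      have hθtop : Tendsto θ atTop atTop := hθ.tendsto_atTop
      have hsa'' : Tendsto (fun n => s (φ (ψ (θ n)))) atTop (nhds a) := hsa'.comp hθtop
      have hxv : Tendsto (fun n => x (s (φ (ψ (θ n))))) atTop (nhds (xm a)) :=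
        hleft'.comp (tendsto_nhdsWithin_of_tendsto_nhds_of_eventually_within _ hsa''
          (Eventually.of_forall fun n => ⟨(hs (φ (ψ (θ n)))).2.1, hθlt n⟩))
      have hxu' : Tendsto (fun n => x (t (φ (ψ (θ n))))) atTop (nhds (xm a)) :=
        hxu.comp hθtop
      exact key _ _ _ _ hxu' hxv (by simpa using hε) (fun n => hbad (φ (ψ (θ n))))
  · -- both sequences approach from the right
    have hA' : ∀ᶠ n in atTop, a ≤ t (φ n) := by
      simpa [Filter.not_frequently, not_lt] using hA
    obtain ⟨ψ, hψ, hψle⟩ := Filter.extraction_of_frequently_atTop hA'.frequently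
    have hψtop : Tendsto ψ atTop atTop := hψ.tendsto_atTop
    have hta' : Tendsto (fun n => t (φ (ψ n))) atTop (nhds a) := hta.comp hψtop
    have hsa' : Tendsto (fun n => s (φ (ψ n))) atTop (nhds a) := hsa.comp hψtop
    have hxu : Tendsto (fun n => x (t (φ (ψ n)))) atTop (nhds (x a)) :=
      (hright' a haT).comp (tendsto_nhdsWithin_of_tendsto_nhds_of_eventually_within _ hta'
        (Eventually.of_forall fun n => ⟨hψle n, (ht (φ (ψ n))).2⟩))
    have hxv : Tendsto (fun n => x (s (φ (ψ n)))) atTop (nhds (x a)) :=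
      (hright' a haT).comp (tendsto_nhdsWithin_of_tendsto_nhds_of_eventually_within _ hsa'
        (Eventually.of_forall fun n => ⟨le_trans (hψle n) (hts (φ (ψ n))), (hs (φ (ψ n))).2.2⟩))
    exact key _ _ _ _ hxu hxv (by simpa using hε) (fun n => hbad (φ (ψ n)))
end

section
/- Let μ⋆ be a Borel probability measure on ℝ^d with ∫|v|² dμ⋆ = 1, and let Θ ∈ (1,∞). Suppose that for M > 0 there is λ_M > 0 with ψ_M := log ∫ e^{λ_M |v|² 1[|v|≥M]} μ⋆(dv) < ∞, and let μ⋆_M(dv) := exp(λ_M |v|² 1[|v|≥M] − ψ_M) μ⋆(dv); assume the normalization ∫ |v|² dμ⋆_M = Θ. Then e^{ψ_M} ≤ 1 + Θ M^{−2} e^{ψ_M}; in particular for M² > Θ one has ψ_M ≤ −log(1 − Θ M^{−2}), and ‖μ⋆_M − μ⋆‖_TV ≤ |1 − e^{−ψ_M}| + (Θ+1) M^{−2}. Consequently, if this normalization holds for all M in a sequence tending to ∞, then ψ_M → 0 and ‖μ⋆_M − μ⋆‖_TV → 0 as M → ∞. -/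
/-!
The weight `w = e^{λ|v|² 1[|v|≥M]}` equals `1` below `M`, so `w ≤ 1 + w |v|² / M²` everywhere.
Integrating against `e^{-ψ} μ⋆`, where `ρ = e^{-ψ} w` is the density of `μ⋆_M`, and using
`∫ |v|² dμ⋆_M = Θ` gives the single estimate `0 ≤ 1 - e^{-ψ} ≤ Θ / M²`, from which all claims
follow: the bound on `e^ψ` and on `ψ` are rearrangements of it, and since `ρ ≥ e^{-ψ}` is a
probability density, `∫ |ρ - 1| dμ⋆ ≤ 2 (1 - e^{-ψ})`.
-/

open MeasureTheory Filter
open scoped ENNReal Topology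

/-- `|v|² 1[|v| ≥ M]`. -/
noncomputable def indSq (d : ℕ) (M : ℝ) (v : EuclideanSpace ℝ (Fin d)) : ℝ :=
  if M ≤ ‖v‖ then ‖v‖ ^ 2 else 0

/-- `ψ_M = log ∫ e^{λ_M |v|² 1[|v|≥M]} dμ⋆`. -/
noncomputable def psiTilt (d : ℕ) (μ : Measure (EuclideanSpace ℝ (Fin d)))
    (lam M : ℝ) : ℝ :=
  Real.log (∫ v, Real.exp (lam * indSq d M v) ∂μ)

/-- The tilted measure `μ⋆_M(dv) = exp(λ_M |v|² 1[|v|≥M] − ψ_M) μ⋆(dv)`. -/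
noncomputable def tiltedMeasure (d : ℕ) (μ : Measure (EuclideanSpace ℝ (Fin d)))
    (lam M : ℝ) : Measure (EuclideanSpace ℝ (Fin d)) :=
  μ.withDensity fun v => ENNReal.ofReal (Real.exp (lam * indSq d M v - psiTilt d μ lam M))

section Density

variable {α : Type*} [MeasurableSpace α] {μ : Measure α} {f : α → ℝ}

lemma integral_withDensity_ofReal (hf : Measurable f) (hf0 : ∀ x, 0 ≤ f x) (g : α → ℝ) :
    ∫ x, g x ∂μ.withDensity (fun x => ENNReal.ofReal (f x)) = ∫ x, f x * g x ∂μ := by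
  rw [integral_withDensity_eq_integral_toReal_smul hf.ennreal_ofReal
    (ae_of_all _ fun _ => ENNReal.ofReal_lt_top)]
  simp only [ENNReal.toReal_ofReal (hf0 _), smul_eq_mul]

lemma integrable_withDensity_ofReal_iff (hf : Measurable f) (hf0 : ∀ x, 0 ≤ f x) {g : α → ℝ} :
    Integrable g (μ.withDensity fun x => ENNReal.ofReal (f x)) ↔
      Integrable (fun x => f x * g x) μ := by
  rw [integrable_withDensity_iff_integrable_smul' hf.ennreal_ofReal
    (ae_of_all _ fun _ => ENNReal.ofReal_lt_top)]
  simp only [ENNReal.toReal_ofReal (hf0 _), smul_eq_mul]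

lemma integral_abs_sub_one_le_of_le [IsProbabilityMeasure μ] {c : ℝ} (hf : Integrable f μ)
    (hf1 : ∫ x, f x ∂μ = 1) (hc : ∀ x, c ≤ f x) :
    ∫ x, |f x - 1| ∂μ ≤ 2 * (1 - c) := by
  have hc1 : c ≤ 1 := by simpa [hf1] using integral_mono (integrable_const c) hf hc
  have hpt : ∀ x, |f x - 1| ≤ f x - 1 + 2 * (1 - c) := fun x => by
    rw [abs_le]; constructor <;> linarith [hc x]
  have hf' : Integrable (fun x => f x - 1) μ := hf.sub (integrable_const 1)
  calc ∫ x, |f x - 1| ∂μ ≤ ∫ x, (f x - 1 + 2 * (1 - c)) ∂μ :=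
        integral_mono hf'.abs (hf'.add (integrable_const _)) hpt
    _ = 2 * (1 - c) := by
        rw [integral_add hf' (integrable_const _), integral_sub hf (integrable_const 1)]
        simp [hf1]

end Density

lemma exp_le_one_add_mul_exp_of_one_sub_exp_neg_le {ψ a : ℝ} (h : 1 - Real.exp (-ψ) ≤ a) :
    Real.exp ψ ≤ 1 + a * Real.exp ψ := by
  have := mul_le_mul_of_nonneg_right h (Real.exp_pos ψ).le
  rw [sub_mul, one_mul, ← Real.exp_add, neg_add_cancel, Real.exp_zero] at this
  linarith

lemma le_neg_log_one_sub_of_one_sub_exp_neg_le {ψ a : ℝ} (h : 1 - Real.exp (-ψ) ≤ a)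
    (ha : a < 1) : ψ ≤ -Real.log (1 - a) := by
  have := Real.log_le_log (by linarith) (show 1 - a ≤ Real.exp (-ψ) by linarith)
  rw [Real.log_exp] at this
  linarith

section Tilt

variable {d : ℕ} {μ : Measure (EuclideanSpace ℝ (Fin d))} {lam M : ℝ}

lemma measurable_indSq : Measurable (indSq d M) :=
  Measurable.ite (measurableSet_le measurable_const measurable_norm)
    (measurable_norm.pow_const 2) measurable_const

lemma indSq_nonneg (v : EuclideanSpace ℝ (Fin d)) : 0 ≤ indSq d M v := by
  unfold indSq; split_ifs <;> positivity

lemma one_le_exp_mul_indSq (hlam : 0 ≤ lam) (v : EuclideanSpace ℝ (Fin d)) :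
    1 ≤ Real.exp (lam * indSq d M v) :=
  Real.one_le_exp (mul_nonneg hlam (indSq_nonneg v))

lemma exp_mul_indSq_le (hM : 0 < M) (v : EuclideanSpace ℝ (Fin d)) :
    Real.exp (lam * indSq d M v) ≤ 1 + Real.exp (lam * indSq d M v) * ‖v‖ ^ 2 / M ^ 2 := by
  unfold indSq
  split_ifs with h
  · have hM2 : M ^ 2 ≤ ‖v‖ ^ 2 := pow_le_pow_left₀ hM.le h 2
    have : Real.exp (lam * ‖v‖ ^ 2) ≤ Real.exp (lam * ‖v‖ ^ 2) * ‖v‖ ^ 2 / M ^ 2 := by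
      rw [le_div_iff₀ (by positivity)]
      exact mul_le_mul_of_nonneg_left hM2 (Real.exp_pos _).le
    linarith
  · simp only [mul_zero, Real.exp_zero, one_mul, le_add_iff_nonneg_right]
    positivity

lemma exp_sub_psiTilt (v : EuclideanSpace ℝ (Fin d)) :
    Real.exp (lam * indSq d M v - psiTilt d μ lam M) =
      Real.exp (-psiTilt d μ lam M) * Real.exp (lam * indSq d M v) := by
  rw [← Real.exp_add, neg_add_eq_sub]

lemma measurable_tiltedMeasure_density :
    Measurable fun v => Real.exp (lam * indSq d M v - psiTilt d μ lam M) :=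
  Real.measurable_exp.comp ((measurable_indSq.const_mul lam).sub_const _)

lemma integral_tiltedMeasure (g : EuclideanSpace ℝ (Fin d) → ℝ) :
    ∫ v, g v ∂tiltedMeasure d μ lam M =
      ∫ v, Real.exp (lam * indSq d M v - psiTilt d μ lam M) * g v ∂μ :=
  integral_withDensity_ofReal measurable_tiltedMeasure_density (fun _ => (Real.exp_pos _).le) g

lemma integrable_tiltedMeasure_iff {g : EuclideanSpace ℝ (Fin d) → ℝ} :
    Integrable g (tiltedMeasure d μ lam M) ↔
      Integrable (fun v => Real.exp (lam * indSq d M v - psiTilt d μ lam M) * g v) μ :=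
  integrable_withDensity_ofReal_iff measurable_tiltedMeasure_density
    (fun _ => (Real.exp_pos _).le)

lemma integrable_tiltedMeasure_density
    (hInt : Integrable (fun v => Real.exp (lam * indSq d M v)) μ) :
    Integrable (fun v => Real.exp (lam * indSq d M v - psiTilt d μ lam M)) μ :=
  (hInt.const_mul _).congr (ae_of_all _ fun v => (exp_sub_psiTilt v).symm)

variable [IsProbabilityMeasure μ]

lemma one_le_integral_exp_mul_indSq (hlam : 0 ≤ lam)
    (hInt : Integrable (fun v => Real.exp (lam * indSq d M v)) μ) :
    1 ≤ ∫ v, Real.exp (lam * indSq d M v) ∂μ := by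
  simpa using integral_mono (integrable_const 1) hInt (one_le_exp_mul_indSq hlam)

lemma psiTilt_nonneg (hlam : 0 ≤ lam)
    (hInt : Integrable (fun v => Real.exp (lam * indSq d M v)) μ) : 0 ≤ psiTilt d μ lam M :=
  Real.log_nonneg (one_le_integral_exp_mul_indSq hlam hInt)

lemma one_sub_exp_neg_psiTilt_nonneg (hlam : 0 ≤ lam)
    (hInt : Integrable (fun v => Real.exp (lam * indSq d M v)) μ) :
    0 ≤ 1 - Real.exp (-psiTilt d μ lam M) :=
  sub_nonneg.2 (Real.exp_le_one_iff.2 (neg_nonpos.2 (psiTilt_nonneg hlam hInt)))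

lemma integral_tiltedMeasure_density (hlam : 0 ≤ lam)
    (hInt : Integrable (fun v => Real.exp (lam * indSq d M v)) μ) :
    ∫ v, Real.exp (lam * indSq d M v - psiTilt d μ lam M) ∂μ = 1 := by
  simp_rw [exp_sub_psiTilt, integral_const_mul, psiTilt, Real.exp_neg,
    Real.exp_log (by linarith [one_le_integral_exp_mul_indSq hlam hInt] :
      0 < ∫ v, Real.exp (lam * indSq d M v) ∂μ)]
  exact inv_mul_cancel₀ (by linarith [one_le_integral_exp_mul_indSq hlam hInt])

lemma one_sub_exp_neg_psiTilt_le {Θ : ℝ} (hΘ : Θ ≠ 0) (hM : 0 < M) (hlam : 0 ≤ lam)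
    (hInt : Integrable (fun v => Real.exp (lam * indSq d M v)) μ)
    (hnorm : ∫ v, ‖v‖ ^ 2 ∂tiltedMeasure d μ lam M = Θ) :
    1 - Real.exp (-psiTilt d μ lam M) ≤ Θ / M ^ 2 := by
  have hsq : Integrable
      (fun v => Real.exp (lam * indSq d M v - psiTilt d μ lam M) * ‖v‖ ^ 2) μ :=
    integrable_tiltedMeasure_iff.mp (Integrable.of_integral_ne_zero (hnorm ▸ hΘ))
  have hpt : ∀ v, Real.exp (lam * indSq d M v - psiTilt d μ lam M) ≤
      Real.exp (-psiTilt d μ lam M) +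
        Real.exp (lam * indSq d M v - psiTilt d μ lam M) * ‖v‖ ^ 2 / M ^ 2 := fun v => by
    rw [exp_sub_psiTilt]
    calc _ ≤ Real.exp (-psiTilt d μ lam M) *
          (1 + Real.exp (lam * indSq d M v) * ‖v‖ ^ 2 / M ^ 2) :=
          mul_le_mul_of_nonneg_left (exp_mul_indSq_le hM v) (Real.exp_pos _).le
      _ = _ := by ring
  suffices 1 ≤ Real.exp (-psiTilt d μ lam M) + Θ / M ^ 2 by linarith
  calc 1 = ∫ v, Real.exp (lam * indSq d M v - psiTilt d μ lam M) ∂μ :=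
        (integral_tiltedMeasure_density hlam hInt).symm
    _ ≤ ∫ v, (Real.exp (-psiTilt d μ lam M) +
          Real.exp (lam * indSq d M v - psiTilt d μ lam M) * ‖v‖ ^ 2 / M ^ 2) ∂μ :=
        integral_mono (integrable_tiltedMeasure_density hInt)
          ((integrable_const _).add (hsq.div_const _)) hpt
    _ = Real.exp (-psiTilt d μ lam M) + Θ / M ^ 2 := by
        rw [integral_add (integrable_const _) (hsq.div_const _), integral_div,
          ← integral_tiltedMeasure, hnorm]
        simp

lemma integral_abs_tiltedMeasure_density_sub_one_le (hlam : 0 ≤ lam)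
    (hInt : Integrable (fun v => Real.exp (lam * indSq d M v)) μ) :
    ∫ v, |Real.exp (lam * indSq d M v - psiTilt d μ lam M) - 1| ∂μ ≤
      2 * (1 - Real.exp (-psiTilt d μ lam M)) := by
  refine integral_abs_sub_one_le_of_le (integrable_tiltedMeasure_density hInt)
    (integral_tiltedMeasure_density hlam hInt) fun v => ?_
  rw [exp_sub_psiTilt]
  exact le_mul_of_one_le_right (Real.exp_pos _).le (one_le_exp_mul_indSq hlam v)

end Tilt

/-- The total variation norm `‖μ⋆_M − μ⋆‖_TV` is expressed as the `L¹(μ⋆)` distance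
`∫ |e^{λ_M|v|²1[|v|≥M]−ψ_M} − 1| dμ⋆` between the densities of `μ⋆_M` and `μ⋆`. -/
theorem tilted_measure_bounds_and_limits_general (d : ℕ)
    (μ : Measure (EuclideanSpace ℝ (Fin d))) [IsProbabilityMeasure μ]
    (Θ : ℝ) (hΘ : 1 < Θ) :
    (∀ M lam : ℝ, 0 < M → 0 < lam →
      Integrable (fun v => Real.exp (lam * indSq d M v)) μ →
      (∫ v, ‖v‖ ^ 2 ∂(tiltedMeasure d μ lam M)) = Θ →
      (Real.exp (psiTilt d μ lam M) ≤ 1 + Θ / M ^ 2 * Real.exp (psiTilt d μ lam M)) ∧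
      (Θ < M ^ 2 → psiTilt d μ lam M ≤ -Real.log (1 - Θ / M ^ 2)) ∧
      ((∫ v, |Real.exp (lam * indSq d M v - psiTilt d μ lam M) - 1| ∂μ)
          ≤ |1 - Real.exp (-psiTilt d μ lam M)| + (Θ + 1) / M ^ 2)) ∧
    (∀ Ms lams : ℕ → ℝ, Tendsto Ms atTop atTop →
      (∀ n, 0 < Ms n ∧ 0 < lams n ∧
        Integrable (fun v => Real.exp (lams n * indSq d (Ms n) v)) μ ∧
        (∫ v, ‖v‖ ^ 2 ∂(tiltedMeasure d μ (lams n) (Ms n))) = Θ) →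
      Tendsto (fun n => psiTilt d μ (lams n) (Ms n)) atTop (𝓝 0) ∧
      Tendsto (fun n =>
          ∫ v, |Real.exp (lams n * indSq d (Ms n) v - psiTilt d μ (lams n) (Ms n)) - 1| ∂μ)
        atTop (𝓝 0)) := by
  have hΘ0 : Θ ≠ 0 := by positivity
  refine ⟨fun M lam hM hlam hInt hnorm => ⟨?_, fun hΘM => ?_, ?_⟩, fun Ms lams hMs h => ?_⟩
  · exact exp_le_one_add_mul_exp_of_one_sub_exp_neg_le
      (one_sub_exp_neg_psiTilt_le hΘ0 hM hlam.le hInt hnorm)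
  · exact le_neg_log_one_sub_of_one_sub_exp_neg_le
      (one_sub_exp_neg_psiTilt_le hΘ0 hM hlam.le hInt hnorm) ((div_lt_one (by positivity)).2 hΘM)
  · have : Θ / M ^ 2 ≤ (Θ + 1) / M ^ 2 := by gcongr; linarith
    rw [abs_of_nonneg (one_sub_exp_neg_psiTilt_nonneg hlam.le hInt)]
    linarith [integral_abs_tiltedMeasure_density_sub_one_le hlam.le hInt,
      one_sub_exp_neg_psiTilt_le hΘ0 hM hlam.le hInt hnorm]
  have hgap : Tendsto (fun n => 1 - Real.exp (-psiTilt d μ (lams n) (Ms n))) atTop (𝓝 0) :=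
    squeeze_zero (fun n => one_sub_exp_neg_psiTilt_nonneg (h n).2.1.le (h n).2.2.1)
      (fun n => one_sub_exp_neg_psiTilt_le hΘ0 (h n).1 (h n).2.1.le (h n).2.2.1 (h n).2.2.2)
      (tendsto_const_nhds.div_atTop ((tendsto_pow_atTop two_ne_zero).comp hMs))
  refine ⟨?_, squeeze_zero (fun n => integral_nonneg fun v => abs_nonneg _)
    (fun n => integral_abs_tiltedMeasure_density_sub_one_le (h n).2.1.le (h n).2.2.1)
    (by simpa using hgap.const_mul 2)⟩
  have hexp : Tendsto (fun n => Real.exp (-psiTilt d μ (lams n) (Ms n))) atTop (𝓝 1) := by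
    simpa using (tendsto_const_nhds (x := (1 : ℝ))).sub hgap
  simpa using ((Real.continuousAt_log one_ne_zero).tendsto.comp hexp).neg

/-- quantitative bounds on the exponential tilt of `μ⋆` at level `M`,
normalised to have energy `Θ`, and the consequent limits along any sequence `M → ∞`.
Here the total variation norm `‖μ⋆_M − μ⋆‖_TV` is the integral `∫ |e^{λ_M|v|²1[|v|≥M]−ψ_M} − 1| dμ⋆`
of the absolute difference of the densities of `μ⋆_M` and `μ⋆` with respect to `μ⋆`. -/
theorem tilted_measure_bounds_and_limits (d : ℕ)
    (μ : Measure (EuclideanSpace ℝ (Fin d))) [IsProbabilityMeasure μ]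
    (hmom : ∫ v, ‖v‖ ^ 2 ∂μ = 1) (Θ : ℝ) (hΘ : 1 < Θ) :
    (∀ M lam : ℝ, 0 < M → 0 < lam →
      Integrable (fun v => Real.exp (lam * indSq d M v)) μ →
      (∫ v, ‖v‖ ^ 2 ∂(tiltedMeasure d μ lam M)) = Θ →
      (Real.exp (psiTilt d μ lam M) ≤ 1 + Θ / M ^ 2 * Real.exp (psiTilt d μ lam M)) ∧
      (Θ < M ^ 2 → psiTilt d μ lam M ≤ -Real.log (1 - Θ / M ^ 2)) ∧
      ((∫ v, |Real.exp (lam * indSq d M v - psiTilt d μ lam M) - 1| ∂μ)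
          ≤ |1 - Real.exp (-psiTilt d μ lam M)| + (Θ + 1) / M ^ 2)) ∧
    (∀ Ms lams : ℕ → ℝ, Tendsto Ms atTop atTop →
      (∀ n, 0 < Ms n ∧ 0 < lams n ∧
        Integrable (fun v => Real.exp (lams n * indSq d (Ms n) v)) μ ∧
        (∫ v, ‖v‖ ^ 2 ∂(tiltedMeasure d μ (lams n) (Ms n))) = Θ) →
      Tendsto (fun n => psiTilt d μ (lams n) (Ms n)) atTop (𝓝 0) ∧
      Tendsto (fun n =>
          ∫ v, |Real.exp (lams n * indSq d (Ms n) v - psiTilt d μ (lams n) (Ms n)) - 1| ∂μ)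
        atTop (𝓝 0)) :=
  tilted_measure_bounds_and_limits_general d μ Θ hΘ
end

section
/- Let T > 0 and let f : [0,T]×ℝ^d → ℝ be measurable with sup_{t ≤ T} ‖f(t,·)‖_∞ < ∞ and f(t,·) continuous for each t. Let (μ^n_•)_{n} and μ_• be càdlàg paths [0,T] → (Borel probability measures on ℝ^d with finite second moment, W) such that ρ(μ^n_•, μ_•) → 0, where ρ is the Skorokhod metric built from W. Then ∫₀^T ∫_{ℝ^d} f(t,v) μ^n_t(dv) dt → ∫₀^T ∫_{ℝ^d} f(t,v) μ_t(dv) dt as n → ∞. -/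
/-!
Control of bounded Lipschitz integrals by `W` and the Lipschitz portmanteau criterion show that
`W`-convergence implies weak convergence. A path that is right-continuous in `W` is then weakly
right-continuous, hence continuous off a countable set: a point where the path jumps by `ε` from
the left has a right neighbourhood containing no such point. At a continuity point `t` the
Skorokhod time changes satisfy `ιₙ t → t`, so `μⁿ_t` is `W`-close to `μ_{ιₙ t} → μ_t` and
`μⁿ_t → μ_t` weakly. The inner integrals therefore converge for almost every `t`; they are
measurable in `t` as limits of `∫ f(t,·) dμ_{gₖ t}`, where `gₖ t ↓ t` runs through the grid
`(k+1)⁻¹ℤ`, and dominated convergence concludes.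
-/

open MeasureTheory Filter Set
open scoped ENNReal Topology NNReal

/-- The bounded-Lipschitz metric
`W(μ,ν) = sup{∫ f dμ − ∫ f dν : ‖f‖_∞ ≤ 1, Lip(f) ≤ 1}`. -/
noncomputable def blDist (d : ℕ) (μ ν : Measure (EuclideanSpace ℝ (Fin d))) : ℝ :=
  ⨆ f : {f : EuclideanSpace ℝ (Fin d) → ℝ // (∀ x, |f x| ≤ 1) ∧ LipschitzWith 1 f},
    (∫ x, f.1 x ∂μ) - ∫ x, f.1 x ∂ν

/-- A measure-valued path which is càdlàg with respect to the bounded-Lipschitz metric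
`W` on `[0,T]`: right-continuous in `W`, with left limits in `W`. -/
def CadlagW (d : ℕ) (T : ℝ) (μ : ℝ → Measure (EuclideanSpace ℝ (Fin d))) : Prop :=
  (∀ t ∈ Set.Ico (0 : ℝ) T,
    Tendsto (fun s => blDist d (μ s) (μ t)) (nhdsWithin t (Set.Ioc t T)) (𝓝 0)) ∧
  (∀ t ∈ Set.Ioc (0 : ℝ) T, ∃ ν : Measure (EuclideanSpace ℝ (Fin d)),
    Tendsto (fun s => blDist d (μ s) ν) (nhdsWithin t (Set.Ico 0 t)) (𝓝 0))

/-- The Skorokhod metric on measure-valued paths built from the bounded-Lipschitz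
metric `W`: the infimum over increasing continuous bijections `ι : [0,T] → [0,T]` of
`max(sup_{t≤T} W(x(t), y(ι(t))), sup_{t≤T} |t − ι(t)|)`. -/
noncomputable def skorokhodW (d : ℕ) (T : ℝ)
    (x y : ℝ → Measure (EuclideanSpace ℝ (Fin d))) : ℝ :=
  ⨅ ι : {ι : ℝ → ℝ // ContinuousOn ι (Set.Icc 0 T) ∧ StrictMonoOn ι (Set.Icc 0 T) ∧
      Set.BijOn ι (Set.Icc 0 T) (Set.Icc 0 T)},
    max (⨆ t : Set.Icc (0 : ℝ) T, blDist d (x t) (y (ι.1 t)))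
        (⨆ t : Set.Icc (0 : ℝ) T, |(t : ℝ) - ι.1 t|)

open TopologicalSpace

theorem countable_setOf_not_continuousAt_of_continuousWithinAt_Ioi {X : Type*}
    [TopologicalSpace X] [PseudoMetrizableSpace X] {γ : ℝ → X}
    (hγ : ∀ t, ContinuousWithinAt γ (Ioi t) t) : {t | ¬ ContinuousAt γ t}.Countable := by
  let := pseudoMetrizableSpacePseudoMetric X
  let J : ℝ → Set ℝ := fun ε => {t | ∃ᶠ s in 𝓝[<] t, ε ≤ dist (γ s) (γ t)}
  have hJ : ∀ ε > 0, (J ε).Countable := by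
    intro ε hε
    refine (countable_setOfPred_isolated_right_within (s := J ε)).mono fun x hx => ?_
    refine ⟨hx, ?_⟩
    -- On some `(x, u)` the path stays `ε/2`-close to `γ x`, so no point there jumps by `ε`.
    obtain ⟨u, hxu, hu⟩ := mem_nhdsGT_iff_exists_Ioo_subset.1
      (Metric.tendsto_nhds.1 (hγ x) (ε / 2) (half_pos hε))
    rw [inter_comm, nhdsWithin_inter', inf_principal_eq_bot]
    filter_upwards [Ioo_mem_nhdsGT hxu] with y hy hyJ
    refine hyJ ?_
    filter_upwards [Ioo_mem_nhdsLT hy.1] with s hs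
    refine not_le.2 ?_
    calc dist (γ s) (γ y) ≤ dist (γ s) (γ x) + dist (γ y) (γ x) := dist_triangle_right _ _ _
      _ < ε / 2 + ε / 2 := add_lt_add (hu ⟨hs.1, hs.2.trans hy.2⟩) (hu hy)
      _ = ε := add_halves ε
  refine (countable_iUnion fun m : ℕ => hJ (1 / (m + 1)) Nat.one_div_pos_of_nat).mono
    fun t ht => ?_
  have hleft : ¬ ContinuousWithinAt γ (Iio t) t := fun h =>
    ht (continuousAt_iff_continuous_left'_right'.2 ⟨h, hγ t⟩)
  obtain ⟨ε, hε, hjump⟩ : ∃ ε > 0, ∃ᶠ s in 𝓝[<] t, ε ≤ dist (γ s) (γ t) := by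
    simpa [ContinuousWithinAt, Metric.tendsto_nhds, Filter.not_eventually] using hleft
  obtain ⟨m, hm⟩ := exists_nat_one_div_lt hε
  exact mem_iUnion.2 ⟨m, hjump.mono fun s hs => hm.le.trans hs⟩

lemma lt_floor_add_one_div (t : ℝ) (k : ℕ) : t < (⌊t * (k + 1)⌋ + 1) / (k + 1) := by
  rw [lt_div_iff₀ (by positivity)]
  exact Int.lt_floor_add_one _

lemma floor_add_one_div_le (t : ℝ) (k : ℕ) : (⌊t * (k + 1)⌋ + 1) / (k + 1) ≤ t + 1 / (k + 1) := by
  rw [div_le_iff₀ (by positivity), add_mul, one_div_mul_cancel (by positivity)]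
  linarith [Int.floor_le (t * (k + 1))]

theorem aestronglyMeasurable_diag_of_continuousWithinAt_Ioi {μ : Measure ℝ} {Φ : ℝ → ℝ → ℝ}
    (hΦ : ∀ s, Measurable fun t => Φ t s)
    (hcont : ∀ᵐ t ∂μ, ContinuousWithinAt (Φ t) (Ioi t) t) :
    AEStronglyMeasurable (fun t => Φ t t) μ := by
  let g : ℕ → ℝ → ℝ := fun k t => (⌊t * (k + 1)⌋ + 1) / (k + 1)
  have hg_meas : ∀ k, Measurable fun t => Φ t (g k t) := fun k =>
    (measurable_from_prod_countable_left (f := fun p : ℝ × ℤ => Φ p.1 ((p.2 + 1 : ℝ) / (k + 1)))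
      fun j => hΦ ((j + 1) / (k + 1))).comp (measurable_id.prodMk (measurable_id.mul_const _).floor)
  have hg_tendsto : ∀ t, Tendsto (fun k => g k t) atTop (𝓝[>] t) := fun t =>
    tendsto_nhdsWithin_of_tendsto_nhds_of_eventually_within _
      (tendsto_of_tendsto_of_tendsto_of_le_of_le tendsto_const_nhds
        (by simpa using tendsto_one_div_add_atTop_nhds_zero_nat.const_add t)
        (fun k => (lt_floor_add_one_div t k).le) (floor_add_one_div_le t))
      (Eventually.of_forall (lt_floor_add_one_div t))
  exact aestronglyMeasurable_of_tendsto_ae atTop (fun k => (hg_meas k).aestronglyMeasurable)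
    (hcont.mono fun t ht => ht.tendsto.comp (hg_tendsto t))

section BoundedLipschitz

variable {d : ℕ}

abbrev BLUnitBall (d : ℕ) : Type :=
  {f : EuclideanSpace ℝ (Fin d) → ℝ // (∀ x, |f x| ≤ 1) ∧ LipschitzWith 1 f}

lemma BLUnitBall.abs_integral_le_one (f : BLUnitBall d) (μ : Measure (EuclideanSpace ℝ (Fin d)))
    [IsProbabilityMeasure μ] : |∫ x, f.1 x ∂μ| ≤ 1 := by
  simpa using norm_integral_le_of_norm_le_const (μ := μ)
    (Eventually.of_forall fun x => (Real.norm_eq_abs _).trans_le (f.2.1 x))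

def BLUnitBall.zero : BLUnitBall d := ⟨0, by simp, (LipschitzWith.const 0).weaken zero_le_one⟩

lemma blDist_bddAbove (μ ν : Measure (EuclideanSpace ℝ (Fin d)))
    [IsProbabilityMeasure μ] [IsProbabilityMeasure ν] :
    BddAbove (range fun f : BLUnitBall d => (∫ x, f.1 x ∂μ) - ∫ x, f.1 x ∂ν) := by
  refine ⟨2, forall_mem_range.2 fun f => ?_⟩
  linarith [(abs_le.1 (f.abs_integral_le_one μ)).2, (abs_le.1 (f.abs_integral_le_one ν)).1]

lemma blDist_le_two (μ ν : Measure (EuclideanSpace ℝ (Fin d)))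
    [IsProbabilityMeasure μ] [IsProbabilityMeasure ν] : blDist d μ ν ≤ 2 := by
  have : Nonempty (BLUnitBall d) := ⟨.zero⟩
  exact ciSup_le fun f => by
    linarith [(abs_le.1 (BLUnitBall.abs_integral_le_one f μ)).2,
      (abs_le.1 (BLUnitBall.abs_integral_le_one f ν)).1]

lemma blDist_nonneg (μ ν : Measure (EuclideanSpace ℝ (Fin d)))
    [IsProbabilityMeasure μ] [IsProbabilityMeasure ν] : 0 ≤ blDist d μ ν := by
  simpa [BLUnitBall.zero, blDist] using le_ciSup (blDist_bddAbove μ ν) .zero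

lemma integral_sub_integral_le_mul_blDist (μ ν : Measure (EuclideanSpace ℝ (Fin d)))
    [IsProbabilityMeasure μ] [IsProbabilityMeasure ν] {h : EuclideanSpace ℝ (Fin d) → ℝ}
    {K : ℝ≥0} (hK : 0 < K) (hbound : ∀ x, |h x| ≤ K) (hlip : LipschitzWith K h) :
    (∫ x, h x ∂μ) - ∫ x, h x ∂ν ≤ K * blDist d μ ν := by
  have hK' : (0 : ℝ) < K := hK
  let g : BLUnitBall d := ⟨fun x => h x / K, fun x => by
      rw [abs_div, NNReal.abs_eq, div_le_one hK']; exact hbound x,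
    LipschitzWith.of_dist_le_mul fun x y => by
      rw [Real.dist_eq, ← sub_div, abs_div, NNReal.abs_eq, NNReal.coe_one, one_mul,
        div_le_iff₀ hK', mul_comm]
      exact hlip.dist_le_mul x y⟩
  have := le_ciSup (blDist_bddAbove μ ν) g
  rw [← div_le_iff₀' hK', sub_div, ← integral_div, ← integral_div]
  exact this

lemma abs_integral_sub_integral_le_mul_blDist (μ ν : Measure (EuclideanSpace ℝ (Fin d)))
    [IsProbabilityMeasure μ] [IsProbabilityMeasure ν] {h : EuclideanSpace ℝ (Fin d) → ℝ}
    {K : ℝ≥0} (hK : 0 < K) (hbound : ∀ x, |h x| ≤ K) (hlip : LipschitzWith K h) :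
    |(∫ x, h x ∂μ) - ∫ x, h x ∂ν| ≤ K * blDist d μ ν := by
  refine abs_sub_le_iff.2 ⟨integral_sub_integral_le_mul_blDist μ ν hK hbound hlip, ?_⟩
  have := integral_sub_integral_le_mul_blDist μ ν hK (h := -h) (by simpa using hbound) hlip.neg
  simp only [Pi.neg_apply, integral_neg] at this
  linarith

theorem ProbabilityMeasure.tendsto_of_tendsto_blDist {ι : Type*} {l : Filter ι}
    [l.IsCountablyGenerated] {μs νs : ι → ProbabilityMeasure (EuclideanSpace ℝ (Fin d))}
    {ν : ProbabilityMeasure (EuclideanSpace ℝ (Fin d))}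
    (hW : Tendsto (fun i => blDist d (μs i) (νs i)) l (𝓝 0)) (hν : Tendsto νs l (𝓝 ν)) :
    Tendsto μs l (𝓝 ν) := by
  refine tendsto_iff_forall_lipschitz_integral_tendsto.2 fun h ⟨C, hC⟩ ⟨L, hL⟩ => ?_
  -- `h` is bounded by `|h 0| + C`, so `K` below bounds both `h` and its Lipschitz constant.
  set K : ℝ≥0 := L + (|h 0| + C).toNNReal + 1
  have hK : 0 < K := by positivity
  have hbound : ∀ x, |h x| ≤ K := fun x => by
    have hosc : |h x - h 0| ≤ C := Real.dist_eq _ _ ▸ hC x 0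
    simp only [K, NNReal.coe_add, NNReal.coe_one]
    linarith [abs_sub_abs_le_abs_sub (h x) (h 0), Real.le_coe_toNNReal (|h 0| + C), L.coe_nonneg]
  have hlip : LipschitzWith K h := hL.weaken (by simp [K, add_assoc])
  have hdiff : Tendsto (fun i => (∫ x, h x ∂(μs i)) - ∫ x, h x ∂(νs i)) l (𝓝 0) :=
    squeeze_zero_norm (fun i => abs_integral_sub_integral_le_mul_blDist _ _ hK hbound hlip)
      (by simpa using hW.const_mul (K : ℝ))
  simpa using hdiff.add (tendsto_iff_forall_lipschitz_integral_tendsto.1 hν h ⟨C, hC⟩ ⟨L, hL⟩)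

end BoundedLipschitz

section TimeIntegral

variable {X : Type*} [MeasurableSpace X] [TopologicalSpace X] [OpensMeasurableSpace X]

lemma ProbabilityMeasure.tendsto_integral_of_continuous_of_abs_le {ι : Type*} {l : Filter ι}
    {νs : ι → ProbabilityMeasure X} {ν : ProbabilityMeasure X} (h : Tendsto νs l (𝓝 ν))
    {g : X → ℝ} (hg : Continuous g) {C : ℝ} (hC : ∀ x, |g x| ≤ C) :
    Tendsto (fun i => ∫ x, g x ∂(νs i : Measure X)) l (𝓝 (∫ x, g x ∂(ν : Measure X))) :=
  ProbabilityMeasure.tendsto_iff_forall_integral_tendsto.1 h (.ofNormedAddCommGroup g hg C hC)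

theorem tendsto_integral_integral_of_ae_tendsto {μ : Measure ℝ} [IsFiniteMeasure μ]
    {γs : ℕ → ℝ → ProbabilityMeasure X} {γ : ℝ → ProbabilityMeasure X}
    (hγs : ∀ n t, ContinuousWithinAt (γs n) (Ioi t) t)
    (hlim : ∀ᵐ t ∂μ, Tendsto (γs · t) atTop (𝓝 (γ t)))
    {f : ℝ → X → ℝ} (hf : Measurable (Function.uncurry f)) {C : ℝ}
    (hfC : ∀ᵐ t ∂μ, ∀ x, |f t x| ≤ C) (hfc : ∀ᵐ t ∂μ, Continuous (f t)) :
    Tendsto (fun n => ∫ t, ∫ x, f t x ∂(γs n t : Measure X) ∂μ) atTop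
      (𝓝 (∫ t, ∫ x, f t x ∂(γ t : Measure X) ∂μ)) := by
  refine tendsto_integral_of_dominated_convergence (fun _ => C) (fun n => ?_)
    (integrable_const C) (fun n => ?_) ?_
  · refine aestronglyMeasurable_diag_of_continuousWithinAt_Ioi
      (Φ := fun t s => ∫ x, f t x ∂(γs n s : Measure X))
      (fun s => (hf.stronglyMeasurable.integral_prod_right' (ν := (γs n s : Measure X))).measurable)
      ?_
    filter_upwards [hfC, hfc] with t htC htc
    exact ProbabilityMeasure.tendsto_integral_of_continuous_of_abs_le (hγs n t) htc htC
  · filter_upwards [hfC] with t htC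
    simpa using norm_integral_le_of_norm_le_const (μ := (γs n t : Measure X))
      (Eventually.of_forall fun x => (Real.norm_eq_abs _).trans_le (htC x))
  · filter_upwards [hlim, hfC, hfc] with t ht htC htc
    exact ProbabilityMeasure.tendsto_integral_of_continuous_of_abs_le ht htc htC

end TimeIntegral

section Paths

variable {d : ℕ} {T : ℝ}

/-- The path as a map into `ProbabilityMeasure`, extended constantly outside `[0, T]` so that
right-continuity on `[0, T)` becomes right-continuity on all of `ℝ`. -/
noncomputable def probPath (hT : 0 ≤ T) (μ : ℝ → Measure (EuclideanSpace ℝ (Fin d)))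
    (hμ : ∀ t ∈ Icc 0 T, IsProbabilityMeasure (μ t)) :
    ℝ → ProbabilityMeasure (EuclideanSpace ℝ (Fin d)) :=
  fun t => ⟨μ (projIcc 0 T hT t), hμ _ (projIcc 0 T hT t).2⟩

lemma exists_timeChange_of_skorokhodW_lt {μ ν : ℝ → Measure (EuclideanSpace ℝ (Fin d))}
    (hμ : ∀ t ∈ Icc 0 T, IsProbabilityMeasure (μ t))
    (hν : ∀ t ∈ Icc 0 T, IsProbabilityMeasure (ν t)) {ε : ℝ} (h : skorokhodW d T μ ν < ε) :
    ∃ ι : ℝ → ℝ, MapsTo ι (Icc 0 T) (Icc 0 T) ∧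
      ∀ t ∈ Icc 0 T, blDist d (μ t) (ν (ι t)) < ε ∧ |t - ι t| < ε := by
  have : Nonempty {ι : ℝ → ℝ // ContinuousOn ι (Icc 0 T) ∧ StrictMonoOn ι (Icc 0 T) ∧
      BijOn ι (Icc 0 T) (Icc 0 T)} :=
    ⟨id, continuousOn_id, strictMono_id.strictMonoOn _, bijOn_id _⟩
  obtain ⟨⟨ι, hι⟩, hlt⟩ := exists_lt_of_ciInf_lt h
  replace hι := hι.2.2
  refine ⟨ι, hι.mapsTo, fun t ht => ⟨?_, ?_⟩⟩
  · have hbdd : BddAbove (range fun s : Icc 0 T => blDist d (μ s) (ν (ι s))) := by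
      refine ⟨2, forall_mem_range.2 fun s => ?_⟩
      have := hμ s s.2
      have := hν _ (hι.mapsTo s.2)
      exact blDist_le_two _ _
    exact (le_ciSup hbdd ⟨t, ht⟩).trans_lt ((le_max_left _ _).trans_lt hlt)
  · have hbdd : BddAbove (range fun s : Icc 0 T => |(s : ℝ) - ι s|) := by
      refine ⟨T, forall_mem_range.2 fun s => ?_⟩
      have := hι.mapsTo s.2
      exact abs_sub_le_of_nonneg_of_le s.2.1 s.2.2 this.1 this.2
    exact (le_ciSup hbdd ⟨t, ht⟩).trans_lt ((le_max_right _ _).trans_lt hlt)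

variable (hT : 0 ≤ T) {μ : ℝ → Measure (EuclideanSpace ℝ (Fin d))}
  (hμ : ∀ t ∈ Icc 0 T, IsProbabilityMeasure (μ t))

lemma coe_probPath_of_mem {t : ℝ} (ht : t ∈ Icc 0 T) :
    (probPath hT μ hμ t : Measure (EuclideanSpace ℝ (Fin d))) = μ t := by
  change μ (projIcc 0 T hT t) = μ t
  rw [projIcc_of_mem hT ht]

lemma probPath_congr {s t : ℝ} (h : projIcc 0 T hT s = projIcc 0 T hT t) :
    probPath hT μ hμ s = probPath hT μ hμ t :=
  Subtype.ext (congrArg (fun u : Icc 0 T => μ u) h)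

lemma continuousWithinAt_Ioi_probPath (hcad : CadlagW d T μ) (t : ℝ) :
    ContinuousWithinAt (probPath hT μ hμ) (Ioi t) t := by
  rcases lt_or_ge t 0 with ht0 | ht0
  · refine continuousWithinAt_const.congr_of_eventuallyEq ?_ rfl
    filter_upwards [nhdsWithin_le_nhds (Iio_mem_nhds ht0)] with s hs
    exact probPath_congr hT hμ
      ((projIcc_of_le_left hT (le_of_lt hs)).trans (projIcc_of_le_left hT ht0.le).symm)
  rcases lt_or_ge t T with htT | htT
  · rw [ContinuousWithinAt, ← nhdsWithin_Ioc_eq_nhdsGT htT]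
    refine ProbabilityMeasure.tendsto_of_tendsto_blDist ?_ tendsto_const_nhds
    refine (hcad.1 t ⟨ht0, htT⟩).congr' ?_
    filter_upwards [self_mem_nhdsWithin] with s hs
    rw [coe_probPath_of_mem hT hμ ⟨ht0.trans hs.1.le, hs.2⟩,
      coe_probPath_of_mem hT hμ ⟨ht0, htT.le⟩]
  · refine continuousWithinAt_const.congr (fun s hs => ?_) rfl
    exact probPath_congr hT hμ
      ((projIcc_of_right_le hT (htT.trans (le_of_lt hs))).trans (projIcc_of_right_le hT htT).symm)

theorem tendsto_probPath_of_tendsto_skorokhodW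
    {μn : ℕ → ℝ → Measure (EuclideanSpace ℝ (Fin d))}
    (hμn : ∀ n, ∀ t ∈ Icc 0 T, IsProbabilityMeasure (μn n t))
    (hconv : Tendsto (fun n => skorokhodW d T (μn n) μ) atTop (𝓝 0)) {t : ℝ} (ht : t ∈ Icc 0 T)
    (hcont : ContinuousAt (probPath hT μ hμ) t) :
    Tendsto (fun n => probPath hT (μn n) (hμn n) t) atTop (𝓝 (probPath hT μ hμ t)) := by
  set ε : ℕ → ℝ := fun n => skorokhodW d T (μn n) μ + 1 / (n + 1)
  have hε : Tendsto ε atTop (𝓝 0) := by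
    have := hconv.add tendsto_one_div_add_atTop_nhds_zero_nat
    rwa [add_zero] at this
  choose ι hιT hι using fun n => exists_timeChange_of_skorokhodW_lt (hμn n) hμ
    (show skorokhodW d T (μn n) μ < ε n from lt_add_of_pos_right _ Nat.one_div_pos_of_nat)
  have hιt : Tendsto (fun n => ι n t) atTop (𝓝 t) := by
    refine tendsto_iff_norm_sub_tendsto_zero.2 (squeeze_zero_norm (fun n => ?_) hε)
    rw [norm_norm, Real.norm_eq_abs, abs_sub_comm]
    exact (hι n t ht).2.le
  refine ProbabilityMeasure.tendsto_of_tendsto_blDist (νs := fun n => probPath hT μ hμ (ι n t))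
    (squeeze_zero (fun n => ?_) (fun n => ?_) hε) (hcont.tendsto.comp hιt)
  all_goals
    have := hμn n t ht
    have := hμ _ (hιT n ht)
    rw [coe_probPath_of_mem hT (hμn n) ht, coe_probPath_of_mem hT hμ (hιT n ht)]
  · exact blDist_nonneg _ _
  · exact (hι n t ht).1.le

end Paths

theorem time_integral_convergence_of_skorokhod_general (d : ℕ) (T : ℝ) (hT : 0 < T)
    (f : ℝ → EuclideanSpace ℝ (Fin d) → ℝ)
    (hf_meas : Measurable (Function.uncurry f))
    (hf_bdd : ∃ C, ∀ t ∈ Set.Icc (0 : ℝ) T, ∀ v, |f t v| ≤ C)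
    (hf_cont : ∀ t ∈ Set.Icc (0 : ℝ) T, Continuous (f t))
    (μn : ℕ → ℝ → Measure (EuclideanSpace ℝ (Fin d)))
    (μ : ℝ → Measure (EuclideanSpace ℝ (Fin d)))
    (hprobn : ∀ n, ∀ t ∈ Set.Icc (0 : ℝ) T, IsProbabilityMeasure (μn n t))
    (hprob : ∀ t ∈ Set.Icc (0 : ℝ) T, IsProbabilityMeasure (μ t))
    (hcadn : ∀ n, CadlagW d T (μn n)) (hcad : CadlagW d T μ)
    (hconv : Tendsto (fun n => skorokhodW d T (μn n) μ) atTop (𝓝 0)) :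
    Tendsto (fun n => ∫ t in Set.Icc (0 : ℝ) T, (∫ v, f t v ∂(μn n t))) atTop
      (𝓝 (∫ t in Set.Icc (0 : ℝ) T, (∫ v, f t v ∂(μ t)))) := by
  obtain ⟨C, hC⟩ := hf_bdd
  have hpath : ∀ ν hν, ∫ t in Icc 0 T, ∫ v, f t v ∂(ν t) =
      ∫ t in Icc 0 T, ∫ v, f t v ∂(probPath hT.le ν hν t : Measure _) := fun ν hν =>
    setIntegral_congr_fun measurableSet_Icc fun t ht => by rw [coe_probPath_of_mem hT.le hν ht]
  simp only [hpath _ (hprobn _), hpath μ hprob]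
  refine tendsto_integral_integral_of_ae_tendsto
    (fun n => continuousWithinAt_Ioi_probPath hT.le (hprobn n) (hcadn n)) ?_ hf_meas
    (ae_restrict_of_forall_mem measurableSet_Icc hC)
    (ae_restrict_of_forall_mem measurableSet_Icc hf_cont)
  have hjumps := (countable_setOf_not_continuousAt_of_continuousWithinAt_Ioi
    (continuousWithinAt_Ioi_probPath hT.le hprob hcad)).measure_zero volume
  filter_upwards [ae_restrict_mem measurableSet_Icc,
    ae_restrict_of_ae (measure_eq_zero_iff_ae_notMem.1 hjumps)] with t ht htc
  exact tendsto_probPath_of_tendsto_skorokhodW hT.le hprob hprobn hconv ht (not_not.1 htc)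

/-- if `f : [0,T]×ℝ^d → ℝ` is measurable, uniformly bounded, and
continuous in the velocity variable, and `μ^n_• → μ_•` in the Skorokhod metric built
from the bounded-Lipschitz metric `W`, then
`∫₀^T ∫ f(t,v) μ^n_t(dv) dt → ∫₀^T ∫ f(t,v) μ_t(dv) dt`. -/
theorem time_integral_convergence_of_skorokhod (d : ℕ) (T : ℝ) (hT : 0 < T)
    (f : ℝ → EuclideanSpace ℝ (Fin d) → ℝ)
    (hf_meas : Measurable (Function.uncurry f))
    (hf_bdd : ∃ C, ∀ t ∈ Set.Icc (0 : ℝ) T, ∀ v, |f t v| ≤ C)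
    (hf_cont : ∀ t ∈ Set.Icc (0 : ℝ) T, Continuous (f t))
    (μn : ℕ → ℝ → Measure (EuclideanSpace ℝ (Fin d)))
    (μ : ℝ → Measure (EuclideanSpace ℝ (Fin d)))
    (hprobn : ∀ n, ∀ t ∈ Set.Icc (0 : ℝ) T, IsProbabilityMeasure (μn n t))
    (hprob : ∀ t ∈ Set.Icc (0 : ℝ) T, IsProbabilityMeasure (μ t))
    (hmomn : ∀ n, ∀ t ∈ Set.Icc (0 : ℝ) T,
      ∫⁻ v, ENNReal.ofReal (‖v‖ ^ 2) ∂(μn n t) < ⊤)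
    (hmom : ∀ t ∈ Set.Icc (0 : ℝ) T, ∫⁻ v, ENNReal.ofReal (‖v‖ ^ 2) ∂(μ t) < ⊤)
    (hcadn : ∀ n, CadlagW d T (μn n)) (hcad : CadlagW d T μ)
    (hconv : Tendsto (fun n => skorokhodW d T (μn n) μ) atTop (𝓝 0)) :
    Tendsto (fun n => ∫ t in Set.Icc (0 : ℝ) T, (∫ v, f t v ∂(μn n t))) atTop
      (𝓝 (∫ t in Set.Icc (0 : ℝ) T, (∫ v, f t v ∂(μ t)))) :=
  time_integral_convergence_of_skorokhod_general d T hT f hf_meas hf_bdd hf_cont μn μ hprobn hprob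
    hcadn hcad hconv
end
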